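/- If an updown category C is evenly up-covered with sequence {u_n} and evenly down-covered with sequence {d_n}, then the coefficients a_n of its object generating function satisfy a_n·u_n = a_{n+1}·d_{n+1} for all n ≥ 0. In particular, if C is evenly up-covered and factorial with Aut(0̂) trivial, then a_n = u_0·u_1·...·u_{n−1}/n! for n ≥ 1. -/

import Mathlib

structure UDData where
  Obj : Type
  Hom : Obj → Obj → Type
  idm : ∀ p, Hom p p
  comp : ∀ {p q r : Obj}, Hom p q → Hom q r → Hom p r
  idm_comp : ∀ {p q : Obj} (f : Hom p q), comp (idm p) f = f
  comp_idm : ∀ {p q : Obj} (f : Hom p q), comp f (idm q) = f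
  comp_assoc : ∀ {p q r s : Obj} (f : Hom p q) (g : Hom q r) (h : Hom r s),
    comp (comp f g) h = comp f (comp g h)
  rank : Obj → ℕ
  zhat : Obj

namespace UDData

def cast {C : UDData} {p q q' : C.Obj} (h : q = q') (f : C.Hom p q) : C.Hom p q' := h ▸ f

def Chain (C : UDData) : ℕ → C.Obj → C.Obj → Type
  | 0, p, q => PLift (p = q)
  | n + 1, p, q => (r : C.Obj) × C.Chain n p r × {f : C.Hom r q // C.rank q = C.rank r + 1}

structure IsUpdown (C : UDData) : Prop where
  rank_finite : ∀ n : ℕ, {p : C.Obj | C.rank p = n}.Finite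
  hom_finite : ∀ p q : C.Obj, Finite (C.Hom p q)
  rank_zhat : C.rank C.zhat = 0
  zhat_unique : ∀ p : C.Obj, C.rank p = 0 → p = C.zhat
  from_zhat : ∀ p : C.Obj, Nonempty (C.Hom C.zhat p)
  hom_rank : ∀ p q : C.Obj, Nonempty (C.Hom p q) → C.rank p < C.rank q ∨ p = q
  aut_inv : ∀ (p : C.Obj) (f : C.Hom p p),
    ∃ g : C.Hom p p, C.comp f g = C.idm p ∧ C.comp g f = C.idm p
  factor : ∀ {p q : C.Obj} (f : C.Hom p q), C.rank p < C.rank q →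
    ∃ (r : C.Obj) (g : C.Hom p r) (h : C.Hom r q),
      C.rank r = C.rank p + 1 ∧ C.comp g h = f
  pre_free : ∀ {p q : C.Obj}, C.rank q = C.rank p + 1 → ∀ (a : C.Hom p p) (f : C.Hom p q),
    C.comp a f = f → a = C.idm p
  post_free : ∀ {p q : C.Obj}, C.rank q = C.rank p + 1 → ∀ (b : C.Hom q q) (f : C.Hom p q),
    C.comp f b = f → b = C.idm q

variable (C : UDData)

noncomputable def nAut (p : C.Obj) : ℕ := Nat.card (C.Hom p p)

noncomputable def u (p q : C.Obj) : ℕ := Nat.card (C.Hom p q) / C.nAut q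

noncomputable def d (p q : C.Obj) : ℕ := Nat.card (C.Hom p q) / C.nAut p

noncomputable def uStep (p q : C.Obj) : ℕ := if C.rank q = C.rank p + 1 then C.u p q else 0

noncomputable def dStep (p q : C.Obj) : ℕ := if C.rank q = C.rank p + 1 then C.d p q else 0

open Classical in
noncomputable def uext (C : UDData) : ℕ → C.Obj → C.Obj → ℕ
  | 0, p, q => if p = q then 1 else 0
  | n + 1, p, q => ∑ᶠ r : C.Obj, C.uext n p r * C.uStep r q

open Classical in
noncomputable def dext (C : UDData) : ℕ → C.Obj → C.Obj → ℕ
  | 0, p, q => if p = q then 1 else 0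
  | n + 1, p, q => ∑ᶠ r : C.Obj, C.dext n p r * C.dStep r q

noncomputable def uE (p q : C.Obj) : ℕ := C.uext (C.rank q - C.rank p) p q

noncomputable def dE (p q : C.Obj) : ℕ := C.dext (C.rank q - C.rank p) p q

def Univalent (C : UDData) : Prop := ∀ p : C.Obj, Subsingleton (C.Hom p p)

def Simple (C : UDData) : Prop :=
  (∀ p q : C.Obj, Subsingleton (C.Hom p q)) ∧
    ∀ (n : ℕ) (p q : C.Obj), Subsingleton (C.Chain n p q)

def EUC (C : UDData) (u : ℕ → ℕ) : Prop :=
  ∀ p : C.Obj, (∑ᶠ q : C.Obj, C.uStep p q) = u (C.rank p)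

def EDC (C : UDData) (d : ℕ → ℕ) : Prop :=
  ∀ p : C.Obj, (∑ᶠ q : C.Obj, C.dStep q p) = d (C.rank p)

def Factorial (C : UDData) : Prop :=
  ∀ p : C.Obj, (∑ᶠ q : C.Obj, C.dStep q p) = C.rank p

def prod (C D : UDData) : UDData where
  Obj := C.Obj × D.Obj
  Hom := fun p q => C.Hom p.1 q.1 × D.Hom p.2 q.2
  idm := fun p => (C.idm p.1, D.idm p.2)
  comp := fun f g => (C.comp f.1 g.1, D.comp f.2 g.2)
  idm_comp := by intro p q f; cases f; simp [C.idm_comp, D.idm_comp]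
  comp_idm := by intro p q f; cases f; simp [C.comp_idm, D.comp_idm]
  comp_assoc := by intro p q r s f g h; simp [C.comp_assoc, D.comp_assoc]
  rank := fun p => C.rank p.1 + D.rank p.2
  zhat := (C.zhat, D.zhat)

structure Mor (C D : UDData) where
  obj : C.Obj → D.Obj
  map : ∀ {p q : C.Obj}, C.Hom p q → D.Hom (obj p) (obj q)
  map_idm : ∀ p : C.Obj, map (C.idm p) = D.idm (obj p)
  map_comp : ∀ {p q r : C.Obj} (f : C.Hom p q) (g : C.Hom q r),
    map (C.comp f g) = D.comp (map f) (map g)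
  rank_eq : ∀ p : C.Obj, D.rank (obj p) = C.rank p

def Mor.comp {C D E : UDData} (F : Mor C D) (G : Mor D E) : Mor C E where
  obj := fun p => G.obj (F.obj p)
  map := fun f => G.map (F.map f)
  map_idm := by intro p; show G.map (F.map (C.idm p)) = _; rw [F.map_idm, G.map_idm]
  map_comp := by
    intro p q r f g
    show G.map (F.map (C.comp f g)) = E.comp (G.map (F.map f)) (G.map (F.map g))
    rw [F.map_comp, G.map_comp]
  rank_eq := by intro p; rw [G.rank_eq, F.rank_eq]

structure Mor.IsGood {C D : UDData} (F : Mor C D) : Prop where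
  aut_inj : ∀ p : C.Obj, Function.Injective fun a : C.Hom p p => F.map a
  pre_quot_inj : ∀ {p q₁ q₂ : C.Obj} (f₁ : C.Hom p q₁) (f₂ : C.Hom p q₂),
    C.rank q₁ = C.rank p + 1 → C.rank q₂ = C.rank p + 1 →
    ∀ h : F.obj q₁ = F.obj q₂,
      (∃ a : D.Hom (F.obj p) (F.obj p),
        D.comp a (UDData.cast h (F.map f₁)) = F.map f₂) →
      ∃ e : q₁ = q₂, ∃ a : C.Hom p p, C.comp a (UDData.cast e f₁) = f₂
  post_quot_inj : ∀ {p q₁ q₂ : C.Obj} (f₁ : C.Hom p q₁) (f₂ : C.Hom p q₂),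
    C.rank q₁ = C.rank p + 1 → C.rank q₂ = C.rank p + 1 →
    ∀ h : F.obj q₁ = F.obj q₂,
      (∃ b : D.Hom (F.obj q₂) (F.obj q₂),
        D.comp (UDData.cast h (F.map f₁)) b = F.map f₂) →
      ∃ e : q₁ = q₂, ∃ b : C.Hom q₂ q₂, C.comp (UDData.cast e f₁) b = f₂

def Mor.IsCovering {C' C : UDData} (F : Mor C' C) : Prop :=
  Function.Surjective F.obj ∧
    ∀ p q : C'.Obj, C'.rank q = C'.rank p + 1 →
      Function.Bijective fun x : (q' : {q' : C'.Obj // F.obj q' = F.obj q}) × C'.Hom p q'.1 =>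
        UDData.cast x.1.2 (F.map x.2)

noncomputable def objCoeff (n : ℕ) : ℚ :=
  ∑ᶠ p : C.Obj, if C.rank p = n then ((C.nAut p : ℚ))⁻¹ else 0

noncomputable def objGF : PowerSeries ℚ := PowerSeries.mk C.objCoeff

noncomputable def morGF : PowerSeries ℚ :=
  PowerSeries.mk fun n =>
    ∑ᶠ p : C.Obj, ∑ᶠ q : C.Obj,
      if C.rank p + C.rank q = n then (C.uStep p q : ℚ) * ((C.nAut p : ℚ))⁻¹ else 0

noncomputable def sqSub (f : PowerSeries ℚ) : PowerSeries ℚ :=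
  PowerSeries.mk fun n => if 2 ∣ n then PowerSeries.coeff (n / 2) f else 0

noncomputable def coverCard (n : ℕ) : ℕ := Nat.card ((q : C.Obj) × C.Chain n C.zhat q)

noncomputable def inprod (f g : C.Obj → ℚ) : ℚ := ∑ᶠ p : C.Obj, f p * g p * C.nAut p

noncomputable def Uop (f : C.Obj → ℚ) : C.Obj → ℚ := fun q => ∑ᶠ p : C.Obj, f p * C.uStep p q

noncomputable def Dop (f : C.Obj → ℚ) : C.Obj → ℚ := fun p => ∑ᶠ q : C.Obj, f q * C.dStep p q

end UDData

/-!
For a cover `p ⋖ q`, the automorphisms of `q` act freely on `Hom p q` from the right and those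
of `p` act freely from the left, so `u(p,q) |Aut q| = |Hom p q| = d(p,q) |Aut p|` (in particular
the truncating divisions defining `u` and `d` are exact). Hence
`u(p,q) / |Aut p| = d(p,q) / |Aut q|`, and summing this over the covers between ranks `n` and
`n + 1` gives `a_n u_n = a_{n+1} d_{n+1}`. In the factorial case `d_n = n` and `a_0 = 1`, and the
recurrence unrolls to `a_n = u_0 ⋯ u_{n-1} / n!`.
-/

theorem Nat.card_dvd_card_of_free_action {X G : Type*} (act : X → G → X) (mul : G → G → G)
    (e : G) (act_e : ∀ x, act x e = x)
    (act_act : ∀ x g g', act (act x g) g' = act x (mul g g'))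
    (exists_right_inv : ∀ g, ∃ g', mul g g' = e) (free : ∀ x, Function.Injective (act x)) :
    Nat.card G ∣ Nat.card X := by
  let orbitRel : Setoid X :=
    { r := fun x y => ∃ g, act x g = y
      iseqv :=
        { refl := fun x => ⟨e, act_e x⟩
          symm := by
            rintro x _ ⟨g, rfl⟩
            obtain ⟨g', hg'⟩ := exists_right_inv g
            exact ⟨g', by rw [act_act, hg', act_e]⟩
          trans := by
            rintro x _ _ ⟨g, rfl⟩ ⟨g', rfl⟩
            exact ⟨mul g g', (act_act x g g').symm⟩ } }
  have injective : Function.Injective fun c : Quotient orbitRel × G => act c.1.out c.2 := by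
    rintro ⟨c, g⟩ ⟨c', g'⟩ hact
    obtain rfl : c = c' := by
      rw [← Quotient.out_eq c, ← Quotient.out_eq c']
      exact Quotient.sound (orbitRel.trans ⟨g, hact⟩ (orbitRel.symm ⟨g', rfl⟩))
    obtain rfl : g = g' := free _ hact
    rfl
  have surjective : Function.Surjective fun c : Quotient orbitRel × G => act c.1.out c.2 := by
    intro x
    obtain ⟨g, hg⟩ := Quotient.mk_out (s := orbitRel) x
    exact ⟨(⟦x⟧, g), hg⟩
  refine ⟨Nat.card (Quotient orbitRel), ?_⟩
  rw [← Nat.card_congr (Equiv.ofBijective _ ⟨injective, surjective⟩), Nat.card_prod, mul_comm]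

theorem eq_prod_range_div_factorial_of_recurrence {K : Type*} [Field K] [CharZero K]
    {a u : ℕ → K} (h0 : a 0 = 1) (hrec : ∀ n, a n * u n = a (n + 1) * (n + 1)) (n : ℕ) :
    a n = (∏ i ∈ Finset.range n, u i) / n.factorial := by
  induction n with
  | zero => simp [h0]
  | succ n ih =>
    have hn : (n + 1 : K) ≠ 0 := Nat.cast_add_one_ne_zero n
    rw [eq_div_iff hn |>.mpr (hrec n).symm, ih, Finset.prod_range_succ, Nat.factorial_succ]
    push_cast
    field_simp

namespace UDData

theorem rank_eq_of_uStep_ne_zero {C : UDData} {p q : C.Obj} (hpq : C.uStep p q ≠ 0) :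
    C.rank q = C.rank p + 1 := by
  by_contra hr
  exact hpq (if_neg hr)

theorem rank_eq_of_dStep_ne_zero {C : UDData} {p q : C.Obj} (hpq : C.dStep p q ≠ 0) :
    C.rank q = C.rank p + 1 := by
  by_contra hr
  exact hpq (if_neg hr)

namespace IsUpdown

variable {C : UDData} (h : C.IsUpdown)
include h

theorem nAut_pos (p : C.Obj) : 0 < C.nAut p :=
  have := h.hom_finite p p
  Nat.card_pos_iff.mpr ⟨⟨C.idm p⟩, inferInstance⟩

theorem nAut_dvd_card_hom_right {p q : C.Obj} (hpq : C.rank q = C.rank p + 1) :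
    C.nAut q ∣ Nat.card (C.Hom p q) := by
  refine Nat.card_dvd_card_of_free_action C.comp C.comp (C.idm q) C.comp_idm C.comp_assoc
    (fun b => (h.aut_inv q b).imp fun _ hb => hb.1) fun f b b' hbb' => ?_
  obtain ⟨c, hbc, hcb⟩ := h.aut_inv q b'
  have hfix : C.comp f (C.comp b c) = f := by
    rw [← C.comp_assoc, hbb', C.comp_assoc, hbc, C.comp_idm]
  calc b = C.comp (C.comp b c) b' := by rw [C.comp_assoc, hcb, C.comp_idm]
    _ = b' := by rw [h.post_free hpq _ f hfix, C.idm_comp]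

theorem nAut_dvd_card_hom_left {p q : C.Obj} (hpq : C.rank q = C.rank p + 1) :
    C.nAut p ∣ Nat.card (C.Hom p q) := by
  refine Nat.card_dvd_card_of_free_action (fun f a => C.comp a f) (fun a a' => C.comp a' a)
    (C.idm p) C.idm_comp (fun f a a' => (C.comp_assoc a' a f).symm)
    (fun a => (h.aut_inv p a).imp fun _ ha => ha.2) fun f a a' haa' => ?_
  obtain ⟨c, hac, hca⟩ := h.aut_inv p a'
  have hfix : C.comp (C.comp c a) f = f := by
    simp only at haa'
    rw [C.comp_assoc, haa', ← C.comp_assoc, hca, C.idm_comp]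
  calc a = C.comp a' (C.comp c a) := by rw [← C.comp_assoc, hac, C.idm_comp]
    _ = a' := by rw [h.pre_free hpq _ f hfix, C.comp_idm]

theorem uStep_div_nAut_eq (p q : C.Obj) :
    (C.uStep p q : ℚ) / C.nAut p = (C.dStep p q : ℚ) / C.nAut q := by
  unfold uStep dStep
  split_ifs with hpq
  · have hu : C.u p q * C.nAut q = Nat.card (C.Hom p q) :=
      Nat.div_mul_cancel (h.nAut_dvd_card_hom_right hpq)
    have hd : C.d p q * C.nAut p = Nat.card (C.Hom p q) :=
      Nat.div_mul_cancel (h.nAut_dvd_card_hom_left hpq)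
    rw [div_eq_div_iff (by exact_mod_cast (h.nAut_pos p).ne')
      (by exact_mod_cast (h.nAut_pos q).ne')]
    exact_mod_cast hu.trans hd.symm
  · simp

noncomputable def rankFinset (n : ℕ) : Finset C.Obj := (h.rank_finite n).toFinset

theorem mem_rankFinset {n : ℕ} {p : C.Obj} : p ∈ h.rankFinset n ↔ C.rank p = n := by
  simp [rankFinset]

theorem objCoeff_eq_sum (n : ℕ) :
    C.objCoeff n = ∑ p ∈ h.rankFinset n, (C.nAut p : ℚ)⁻¹ := by
  rw [objCoeff, finsum_eq_sum_of_support_subset _ fun p hp => ?_]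
  · exact Finset.sum_congr rfl fun p hp => if_pos (h.mem_rankFinset.mp hp)
  · by_contra hr
    exact hp (if_neg (mt h.mem_rankFinset.mpr hr))

theorem sum_uStep_eq {u : ℕ → ℕ} (hu : C.EUC u) (p : C.Obj) :
    ∑ q ∈ h.rankFinset (C.rank p + 1), C.uStep p q = u (C.rank p) := by
  rw [← hu p, finsum_eq_sum_of_support_subset _ fun q hq => ?_]
  exact h.mem_rankFinset.mpr (rank_eq_of_uStep_ne_zero hq)

theorem sum_dStep_eq {d : ℕ → ℕ} (hd : C.EDC d) {n : ℕ} {q : C.Obj}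
    (hq : C.rank q = n + 1) :
    ∑ p ∈ h.rankFinset n, C.dStep p q = d (n + 1) := by
  rw [← hq, ← hd q, finsum_eq_sum_of_support_subset _ fun p hp => ?_]
  have := rank_eq_of_dStep_ne_zero hp
  exact h.mem_rankFinset.mpr (by omega)

theorem objCoeff_mul_eq {u d : ℕ → ℕ} (hu : C.EUC u) (hd : C.EDC d) (n : ℕ) :
    C.objCoeff n * u n = C.objCoeff (n + 1) * d (n + 1) := by
  calc C.objCoeff n * u n
      = ∑ p ∈ h.rankFinset n, ∑ q ∈ h.rankFinset (n + 1),
          (C.uStep p q : ℚ) / C.nAut p := by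
        rw [h.objCoeff_eq_sum, Finset.sum_mul]
        refine Finset.sum_congr rfl fun p hp => ?_
        rw [← Finset.sum_div, ← h.mem_rankFinset.mp hp, ← h.sum_uStep_eq hu p]
        push_cast
        ring
    _ = ∑ q ∈ h.rankFinset (n + 1), ∑ p ∈ h.rankFinset n,
          (C.dStep p q : ℚ) / C.nAut q := by
        rw [Finset.sum_comm]
        simp only [h.uStep_div_nAut_eq]
    _ = C.objCoeff (n + 1) * d (n + 1) := by
        rw [h.objCoeff_eq_sum, Finset.sum_mul]
        refine Finset.sum_congr rfl fun q hq => ?_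
        rw [← Finset.sum_div, ← h.sum_dStep_eq hd (h.mem_rankFinset.mp hq)]
        push_cast
        ring

theorem objCoeff_zero [Subsingleton (C.Hom C.zhat C.zhat)] : C.objCoeff 0 = 1 := by
  have hzero : h.rankFinset 0 = {C.zhat} := by
    ext p
    rw [mem_rankFinset, Finset.mem_singleton]
    exact ⟨h.zhat_unique p, fun hp => hp ▸ h.rank_zhat⟩
  have hAut : C.nAut C.zhat = 1 := Nat.card_eq_one_iff_unique.mpr ⟨inferInstance, ⟨C.idm _⟩⟩
  rw [h.objCoeff_eq_sum, hzero, Finset.sum_singleton, hAut, Nat.cast_one, inv_one]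

end IsUpdown

end UDData

theorem evenly_covered_coeff_relation (C : UDData) (h : C.IsUpdown) (u d : ℕ → ℕ)
    (hu : C.EUC u) (hd : C.EDC d) :
    (∀ n : ℕ, C.objCoeff n * u n = C.objCoeff (n + 1) * d (n + 1)) ∧
    (C.Factorial → Subsingleton (C.Hom C.zhat C.zhat) → ∀ n : ℕ, 1 ≤ n →
      C.objCoeff n = (∏ i ∈ Finset.range n, (u i : ℚ)) / (n.factorial : ℚ)) := by
  refine ⟨h.objCoeff_mul_eq hu hd, fun hfac _ n _ => ?_⟩
  refine eq_prod_range_div_factorial_of_recurrence h.objCoeff_zero (fun k => ?_) n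
  exact_mod_cast h.objCoeff_mul_eq (d := id) hu hfac k
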